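/- With g(x; y1, y2) = ln(|x − y1| + |x − y2| + |y1 − y2|), the mixed second derivative with respect to the source points satisfies ∂²g/∂y1^i ∂y2^j = (n12^i n12^j − δ^{ij})/(r12 S) + (n12^i − n1^i)(n12^j + n2^j)/S², where S = r1 + r2 + r12, n1 = (x − y1)/r1, n2 = (x − y2)/r2, n12 = (y1 − y2)/r12, valid for x ≠ y1, x ≠ y2 and y1 ≠ y2. -/

import Mathlib

noncomputable section

abbrev E3 := EuclideanSpace ℝ (Fin 3)

def e3 (i : Fin 3) : E3 := EuclideanSpace.single i 1

/-- Mixed second partial derivative `∂²f/∂y1^i ∂y2^j` of a function of two points. -/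
def d12 (i j : Fin 3) (f : E3 → E3 → ℝ) (y1 y2 : E3) : ℝ :=
  fderiv ℝ (fun z1 => fderiv ℝ (f z1) y2 (e3 j)) y1 (e3 i)

/-!
Differentiating `g = log S` in `y2` along `v` gives `-(⟪n2, v⟫ + ⟪n12, v⟫) / S`, and this holds
for every first point near `y1`, since `y1 ≠ y2` is an open condition. In the second
differentiation, along `u` in `y1`, only `n12` and `S` move: the derivative of the unit vector
`n12` gives `(⟪n12, u⟫ ⟪n12, v⟫ - ⟪u, v⟫) / (r12 S)`, and the quotient rule for `1 / S`, with
`∂S/∂y1 = n12 - n1`, gives the second term.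
-/

open Real ContinuousLinearMap
open scoped RealInnerProductSpace

section Perimeter

variable {F : Type*} [NormedAddCommGroup F]

def perimeter (x y1 y2 : F) : ℝ := ‖x - y1‖ + ‖x - y2‖ + ‖y1 - y2‖

theorem perimeter_pos {x y1 y2 : F} (h : x ≠ y2) : 0 < perimeter x y1 y2 := by
  have : 0 < ‖x - y2‖ := norm_pos_iff.2 (sub_ne_zero.2 h)
  unfold perimeter
  positivity

end Perimeter

section Calculus

variable {E F : Type*} [NormedAddCommGroup E] [NormedSpace ℝ E]
  [NormedAddCommGroup F] [InnerProductSpace ℝ F]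

theorem hasFDerivAt_norm {x : F} (hx : x ≠ 0) :
    HasFDerivAt (‖·‖) (‖x‖⁻¹ • innerSL ℝ x) x := by
  have hr : ‖x‖ ≠ 0 := norm_ne_zero_iff.2 hx
  have hsq := (hasStrictFDerivAt_norm_sq x).hasFDerivAt.sqrt (pow_ne_zero 2 hr)
  simp only [Real.sqrt_sq (norm_nonneg _)] at hsq
  convert hsq using 1
  ext v
  simp only [smul_apply, coe_innerSL_apply, smul_eq_mul, one_div, mul_inv_rev, nsmul_eq_mul,
    Nat.cast_ofNat]
  field_simp

theorem HasFDerivAt.norm {f : E → F} {f' : E →L[ℝ] F} {z : E} (hf : HasFDerivAt f f' z)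
    (hz : f z ≠ 0) :
    HasFDerivAt (fun w => ‖f w‖) ((‖f z‖⁻¹ • innerSL ℝ (f z)).comp f') z :=
  (hasFDerivAt_norm hz).comp z hf

theorem hasFDerivAt_norm_sub_const {a z : F} (h : z ≠ a) :
    HasFDerivAt (fun w => ‖w - a‖) (‖z - a‖⁻¹ • innerSL ℝ (z - a)) z := by
  simpa using ((hasFDerivAt_id z).sub_const a).norm (sub_ne_zero.2 h)

theorem hasFDerivAt_norm_const_sub {a z : F} (h : a ≠ z) :
    HasFDerivAt (fun w => ‖a - w‖) (-(‖a - z‖⁻¹ • innerSL ℝ (a - z))) z := by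
  simpa using ((hasFDerivAt_id z).const_sub a).norm (sub_ne_zero.2 h)

theorem hasFDerivAt_inner_div_norm_sub {a z : F} (v : F) (h : z ≠ a) :
    HasFDerivAt (fun w => ⟪w - a, v⟫ / ‖w - a‖)
      (‖z - a‖⁻¹ • (innerSL ℝ v - (⟪z - a, v⟫ / ‖z - a‖ ^ 2) • innerSL ℝ (z - a))) z := by
  have hsub : HasFDerivAt (fun w => w - a) (ContinuousLinearMap.id ℝ F) z :=
    (hasFDerivAt_id z).sub_const a
  have hr : ‖z - a‖ ≠ 0 := norm_ne_zero_iff.2 (sub_ne_zero.2 h)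
  have hnum := hsub.inner ℝ (hasFDerivAt_const v z)
  have hden := (hasDerivAt_inv hr).comp_hasFDerivAt z (hsub.norm (sub_ne_zero.2 h))
  refine (hnum.mul hden).congr_fderiv ?_
  ext w
  simp only [real_inner_comm, map_sub, comp_id, neg_smul, smul_neg, Function.comp_apply,
    add_apply, neg_apply, smul_apply, sub_apply, coe_innerSL_apply, smul_eq_mul, comp_apply,
    ContinuousLinearMap.prod_apply, id_apply, zero_apply, fderivInnerCLM_apply, inner_zero_right,
    zero_add]
  field_simp
  ring

theorem hasFDerivAt_perimeter_fst {x y1 y2 : F} (h1 : x ≠ y1) (h12 : y1 ≠ y2) :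
    HasFDerivAt (fun z => perimeter x z y2)
      (‖y1 - y2‖⁻¹ • innerSL ℝ (y1 - y2) - ‖x - y1‖⁻¹ • innerSL ℝ (x - y1)) y1 := by
  refine (((hasFDerivAt_norm_const_sub h1).add_const _).add
    (hasFDerivAt_norm_sub_const h12)).congr_fderiv ?_
  abel

theorem hasFDerivAt_perimeter_snd {x y1 y2 : F} (h2 : x ≠ y2) (h12 : y1 ≠ y2) :
    HasFDerivAt (fun z => perimeter x y1 z)
      (-(‖x - y2‖⁻¹ • innerSL ℝ (x - y2) + ‖y1 - y2‖⁻¹ • innerSL ℝ (y1 - y2))) y2 := by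
  refine (((hasFDerivAt_norm_const_sub h2).const_add _).add
    (hasFDerivAt_norm_const_sub h12)).congr_fderiv ?_
  abel

theorem fderiv_log_perimeter_snd {x y1 y2 : F} (h2 : x ≠ y2) (h12 : y1 ≠ y2) (v : F) :
    fderiv ℝ (fun z => log (perimeter x y1 z)) y2 v =
      -(⟪x - y2, v⟫ / ‖x - y2‖ + ⟪y1 - y2, v⟫ / ‖y1 - y2‖) / perimeter x y1 y2 := by
  rw [((hasFDerivAt_perimeter_snd h2 h12).log (perimeter_pos h2).ne').fderiv]
  simp only [neg_apply, add_apply, smul_apply, coe_innerSL_apply, smul_eq_mul]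
  ring

theorem fderiv_fderiv_log_perimeter {x y1 y2 : F} (h1 : x ≠ y1) (h2 : x ≠ y2) (h12 : y1 ≠ y2)
    (u v : F) :
    fderiv ℝ (fun z1 => fderiv ℝ (fun z2 => log (perimeter x z1 z2)) y2 v) y1 u =
      let r1 := ‖x - y1‖
      let r2 := ‖x - y2‖
      let r12 := ‖y1 - y2‖
      let S := perimeter x y1 y2
      (⟪y1 - y2, u⟫ / r12 * (⟪y1 - y2, v⟫ / r12) - ⟪u, v⟫) / (r12 * S)
        + (⟪y1 - y2, u⟫ / r12 - ⟪x - y1, u⟫ / r1) * (⟪y1 - y2, v⟫ / r12 + ⟪x - y2, v⟫ / r2)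
          / S ^ 2 := by
  have hfirst : (fun z1 => fderiv ℝ (fun z2 => log (perimeter x z1 z2)) y2 v) =ᶠ[nhds y1]
      fun z1 => -(⟪x - y2, v⟫ / ‖x - y2‖ + ⟪z1 - y2, v⟫ / ‖z1 - y2‖) * (perimeter x z1 y2)⁻¹ := by
    filter_upwards [isOpen_ne.mem_nhds h12] with z1 hz1
    rw [fderiv_log_perimeter_snd h2 hz1, div_eq_mul_inv]
  have hS := (hasDerivAt_inv (perimeter_pos (y1 := y1) h2).ne').comp_hasFDerivAt y1
    (hasFDerivAt_perimeter_fst h1 h12)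
  have hsecond := (((hasFDerivAt_inner_div_norm_sub v h12).const_add
    (⟪x - y2, v⟫ / ‖x - y2‖)).neg).mul hS
  rw [(hsecond.congr_of_eventuallyEq hfirst).fderiv]
  have hr1 : ‖x - y1‖ ≠ 0 := norm_ne_zero_iff.2 (sub_ne_zero.2 h1)
  have hr2 : ‖x - y2‖ ≠ 0 := norm_ne_zero_iff.2 (sub_ne_zero.2 h2)
  have hr12 : ‖y1 - y2‖ ≠ 0 := norm_ne_zero_iff.2 (sub_ne_zero.2 h12)
  have hS0 := (perimeter_pos (y1 := y1) h2).ne'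
  simp only [Pi.neg_apply, Function.comp_apply, add_apply, neg_apply, smul_apply, sub_apply,
    coe_innerSL_apply, smul_eq_mul, real_inner_comm v u]
  field_simp
  ring

end Calculus

theorem inner_e3_right (w : E3) (k : Fin 3) : ⟪w, e3 k⟫ = w k := by
  simp [e3, EuclideanSpace.inner_single_right]

theorem e3_apply (i k : Fin 3) : e3 i k = if i = k then 1 else 0 := by
  simp [e3, eq_comm]

/-- explicit formula for `∂²g/∂y1^i ∂y2^j`. -/
theorem mixed_derivative_log_kernel (x y1 y2 : E3)
    (h1 : x ≠ y1) (h2 : x ≠ y2) (h12 : y1 ≠ y2) (i j : Fin 3) :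
    d12 i j (fun z1 z2 => Real.log (‖x - z1‖ + ‖x - z2‖ + ‖z1 - z2‖)) y1 y2 =
      (let r1 : ℝ := ‖x - y1‖
       let r2 : ℝ := ‖x - y2‖
       let r12 : ℝ := ‖y1 - y2‖
       let S : ℝ := r1 + r2 + r12
       let n1 : Fin 3 → ℝ := fun k => (x - y1) k / r1
       let n2 : Fin 3 → ℝ := fun k => (x - y2) k / r2
       let n12 : Fin 3 → ℝ := fun k => (y1 - y2) k / r12
       (n12 i * n12 j - (if i = j then (1:ℝ) else 0)) / (r12 * S)
         + (n12 i - n1 i) * (n12 j + n2 j) / S ^ 2) := by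
  have h := fderiv_fderiv_log_perimeter h1 h2 h12 (e3 i) (e3 j)
  simp only [inner_e3_right, e3_apply] at h
  exact h
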